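/- arXiv:0908.3463 — 8 statements merged into one kernel-verified Lean document; each statement's English description precedes it below -/
import Mathlib

section
/- Let A = QR be a QR decomposition of a P×M complex matrix A (nonzero columns of Q orthonormal, R upper triangular with nonnegative real diagonal, R = Q^H A). Then for M > 1 and any k with 2 ≤ k ≤ M, the matrix A_{k..M} − Q_{1..k−1} R_{k..M}^{1..k−1} equals Q_{k..M} R_{k..M}^{k..M}, and this factorization is itself a QR decomposition (nonzero columns of Q_{k..M} orthonormal, R_{k..M}^{k..M} upper triangular with nonnegative real diagonal, and R_{k..M}^{k..M} = Q_{k..M}^H (A_{k..M} − Q_{1..k−1} R_{k..M}^{1..k−1})). -/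
open Matrix

/-- Generalized QR decomposition: `A = Q * R`, the nonzero columns of `Q` are
orthonormal, `R` is upper triangular with real nonnegative diagonal, and `R = Qᴴ * A`. -/
def IsQR {P M : ℕ} (A Q : Matrix (Fin P) (Fin M) ℂ)
    (R : Matrix (Fin M) (Fin M) ℂ) : Prop :=
  A = Q * R ∧
  (∀ i j : Fin M, (fun p => Q p i) ≠ 0 → (fun p => Q p j) ≠ 0 →
      (Qᴴ * Q) i j = if i = j then 1 else 0) ∧
  (∀ i j : Fin M, j < i → R i j = 0) ∧
  (∀ i : Fin M, (R i i).im = 0 ∧ 0 ≤ (R i i).re) ∧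
  R = Qᴴ * A

theorem qr_reduction_step {P M : ℕ} (A Q : Matrix (Fin P) (Fin M) ℂ)
    (R : Matrix (Fin M) (Fin M) ℂ) (hQR : IsQR A Q R)
    (hM : 1 < M) (k : ℕ) (hk1 : 2 ≤ k) (hk2 : k ≤ M) :
    -- `tail j` is the `j`-th of the columns `k, k+1, …, M` (in 1-based numbering),
    -- `head j` the `j`-th of the columns `1, …, k-1`.
    ∀ (tail : Fin (M - (k - 1)) → Fin M) (head : Fin (k - 1) → Fin M),
      (∀ j, (tail j : ℕ) = (k - 1) + j) → (∀ j, (head j : ℕ) = j) →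
      (A.submatrix id tail - Q.submatrix id head * R.submatrix head tail =
        Q.submatrix id tail * R.submatrix tail tail) ∧
      IsQR (A.submatrix id tail - Q.submatrix id head * R.submatrix head tail)
        (Q.submatrix id tail) (R.submatrix tail tail) := by
  obtain ⟨hA, horth, htri, hdiag, hR⟩ := hQR
  intro tail head htail hhead
  -- bijection between Fin (k-1) ⊕ Fin (M-(k-1)) and Fin M
  have hbij : Function.Bijective (Sum.elim head tail) := by
    rw [Fintype.bijective_iff_injective_and_card]
    constructor
    · rintro (a | a) (b | b) h
      · have := congrArg Fin.val h
        simp only [Sum.elim_inl, hhead] at this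
        exact congrArg Sum.inl (Fin.ext this)
      · have := congrArg Fin.val h
        simp only [Sum.elim_inl, Sum.elim_inr, hhead, htail] at this
        exact absurd this (by have := a.isLt; omega)
      · have := congrArg Fin.val h
        simp only [Sum.elim_inl, Sum.elim_inr, hhead, htail] at this
        exact absurd this (by have := b.isLt; omega)
      · have := congrArg Fin.val h
        simp only [Sum.elim_inr, htail] at this
        exact congrArg Sum.inr (Fin.ext (by omega))
    · simp; omega
  have hsum : ∀ f : Fin M → ℂ,
      ∑ i, f i = (∑ j, f (head j)) + ∑ j, f (tail j) := by
    intro f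
    rw [← Fintype.sum_bijective _ hbij _ f (fun _ => rfl), Fintype.sum_sum_type]
    rfl
  -- The first equation
  have heq : A.submatrix id tail - Q.submatrix id head * R.submatrix head tail =
      Q.submatrix id tail * R.submatrix tail tail := by
    ext p j
    simp only [Matrix.sub_apply, Matrix.mul_apply, Matrix.submatrix_apply, id_eq]
    have : A p (tail j) = ∑ i, Q p i * R i (tail j) := by
      rw [hA]; simp [Matrix.mul_apply]
    rw [this, hsum (fun i => Q p i * R i (tail j))]
    ring
  -- cross orthogonality: (Qᴴ * Q) (tail i) (head j) = 0
  have hQQ0 : ∀ (i : Fin (M - (k - 1))) (j : Fin (k - 1)),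
      (Qᴴ * Q) (tail i) (head j) = 0 := by
    intro i j
    by_cases h1 : (fun p => Q p (tail i)) = 0
    · rw [Matrix.mul_apply]
      apply Finset.sum_eq_zero
      intro p _
      rw [Matrix.conjTranspose_apply, show Q p (tail i) = 0 from congrFun h1 p]
      simp
    · by_cases h2 : (fun p => Q p (head j)) = 0
      · rw [Matrix.mul_apply]
        apply Finset.sum_eq_zero
        intro p _
        rw [show Q p (head j) = 0 from congrFun h2 p]
        simp
      · rw [horth _ _ h1 h2, if_neg]
        intro h
        have := congrArg Fin.val h
        rw [htail, hhead] at this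
        have := j.isLt
        omega
  have hQhQ : (Q.submatrix id tail)ᴴ * Q.submatrix id head = 0 := by
    ext i j
    have : ((Q.submatrix id tail)ᴴ * Q.submatrix id head) i j =
        (Qᴴ * Q) (tail i) (head j) := by
      simp [Matrix.mul_apply, Matrix.conjTranspose_apply, Matrix.submatrix_apply]
    rw [this, hQQ0]
    rfl
  have hQhA : (Q.submatrix id tail)ᴴ * A.submatrix id tail = R.submatrix tail tail := by
    ext i j
    have : ((Q.submatrix id tail)ᴴ * A.submatrix id tail) i j =
        (Qᴴ * A) (tail i) (tail j) := by
      simp [Matrix.mul_apply, Matrix.conjTranspose_apply, Matrix.submatrix_apply]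
    rw [this, ← hR]
    rfl
  refine ⟨heq, heq, ?_, ?_, ?_, ?_⟩
  · -- orthonormality
    intro i j hi hj
    have hval : ((Q.submatrix id tail)ᴴ * Q.submatrix id tail) i j =
        (Qᴴ * Q) (tail i) (tail j) := by
      simp [Matrix.mul_apply, Matrix.conjTranspose_apply, Matrix.submatrix_apply]
    rw [hval, horth _ _ hi hj]
    congr 1
    simp only [eq_iff_iff]
    constructor
    · intro h
      have := congrArg Fin.val h
      rw [htail, htail] at this
      exact Fin.ext (by omega)
    · intro h; rw [h]
  · -- upper triangular
    intro i j hji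
    apply htri
    apply Fin.lt_def.mpr
    rw [htail, htail]
    have := Fin.lt_def.mp hji
    omega
  · -- diagonal
    intro i
    exact hdiag (tail i)
  · -- R' = Q'ᴴ A'
    rw [Matrix.mul_sub, ← Matrix.mul_assoc, hQhQ, Matrix.zero_mul, sub_zero, hQhA]
end

section
/- Let A be a P×M complex matrix with ordered column rank K > 0 (i.e., the first K columns of A are linearly independent but, if K < M, the first K+1 columns are linearly dependent), and let A = QR be a QR decomposition in the generalized sense. Then the first K columns of Q have pairwise orthonormal columns, i.e., Q_{1..K}^H Q_{1..K} = I_K. -/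
open Matrix Submodule

/-- Rank of the matrix formed by the first `k` columns of `A` (for `k ≤ M`). -/
noncomputable def firstColsRank {P M : ℕ} (A : Matrix (Fin P) (Fin M) ℂ) (k : ℕ) : ℕ :=
  (Matrix.of fun (p : Fin P) (j : Fin (min k M)) =>
    A p (Fin.castLE (min_le_right k M) j)).rank

/-- `K` is the ordered column rank of `A`: the largest `k` such that the
first `k` columns of `A` have rank `k`. -/
def OrderedColRank {P M : ℕ} (A : Matrix (Fin P) (Fin M) ℂ) (K : ℕ) : Prop :=
  K ≤ M ∧ firstColsRank A K = K ∧ ∀ k, K < k → k ≤ M → firstColsRank A k ≠ k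


theorem qr_first_K_columns_orthonormal {P M K : ℕ}
    (A Q : Matrix (Fin P) (Fin M) ℂ) (R : Matrix (Fin M) (Fin M) ℂ)
    (hK : OrderedColRank A K) (hKpos : 0 < K) (hKM : K ≤ M)
    (hQR : IsQR A Q R) :
    (Q.submatrix id (Fin.castLE hKM))ᴴ * Q.submatrix id (Fin.castLE hKM) =
      (1 : Matrix (Fin K) (Fin K) ℂ) := by
  obtain ⟨hA, hQorth, hRtri, hRdiag, hR⟩ := hQR
  -- every column of Q with index < K is nonzero
  have hQcol : ∀ l : Fin M, l.val < K → (fun p => Q p l) ≠ 0 := by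
    intro i hiK hQ0
    set S : Finset (Fin P → ℂ) :=
      Finset.image (fun l : Fin K => fun p => Q p (Fin.castLE hKM l)) Finset.univ with hS
    have h0S : (0 : Fin P → ℂ) ∈ S := by
      refine Finset.mem_image.2 ⟨⟨i.val, hiK⟩, Finset.mem_univ _, ?_⟩
      rw [← hQ0]
      congr 1
    have hVmem : ∀ j : Fin M, j.val < K →
        (fun p => A p j) ∈ span ℂ (S : Set (Fin P → ℂ)) := by
      intro j hj
      have hAj : (fun p => A p j) = ∑ l : Fin M, R l j • (fun p => Q p l) := by
        funext p
        simp only [hA, Matrix.mul_apply, Finset.sum_apply, Pi.smul_apply, smul_eq_mul]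
        exact Finset.sum_congr rfl fun l _ => mul_comm _ _
      rw [hAj]
      refine sum_mem fun l _ => ?_
      by_cases hlK : l.val < K
      · refine smul_mem _ _ (subset_span ?_)
        refine Finset.mem_coe.2 (Finset.mem_image.2 ⟨⟨l.val, hlK⟩, Finset.mem_univ _, ?_⟩)
        congr 1
      · have hR0 : R l j = 0 := hRtri l j (by exact Fin.lt_def.2 (by omega))
        simp [hR0]
    have hrank := hK.2.1
    unfold firstColsRank at hrank
    set B := Matrix.of fun (p : Fin P) (j : Fin (min K M)) =>
      A p (Fin.castLE (min_le_right K M) j) with hB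
    have hle : B.rank ≤ K - 1 := by
      rw [Matrix.rank_eq_finrank_span_cols]
      have hsub : Set.range Bᵀ ⊆ (span ℂ (S : Set (Fin P → ℂ)) : Set (Fin P → ℂ)) := by
        rintro _ ⟨j, rfl⟩
        have hjK : (Fin.castLE (min_le_right K M) j).val < K :=
          lt_of_lt_of_le j.2 (min_le_left K M)
        exact hVmem _ hjK
      have h1 : span ℂ (Set.range Bᵀ) ≤ span ℂ (S : Set (Fin P → ℂ)) :=
        span_le.2 hsub
      have h2 : span ℂ (S : Set (Fin P → ℂ)) =
          span ℂ ((S.erase 0 : Finset (Fin P → ℂ)) : Set (Fin P → ℂ)) := by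
        conv_lhs => rw [← Finset.insert_erase h0S]
        rw [Finset.coe_insert, Submodule.span_insert_zero]
      calc Module.finrank ℂ ↥(span ℂ (Set.range Bᵀ))
          ≤ Module.finrank ℂ ↥(span ℂ ((S.erase 0 : Finset (Fin P → ℂ)) : Set (Fin P → ℂ))) := by
            rw [← h2]; exact Submodule.finrank_mono h1
        _ ≤ (S.erase 0).card := finrank_span_finset_le_card _
        _ ≤ K - 1 := by
            have := Finset.card_erase_of_mem h0S
            have hScard : S.card ≤ K := le_trans Finset.card_image_le (by simp)
            omega
    omega
  -- conclude orthonormality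
  ext i j
  have hi := hQcol (Fin.castLE hKM i) i.2
  have hj := hQcol (Fin.castLE hKM j) j.2
  have horth := hQorth _ _ hi hj
  have hentry : ((Q.submatrix id (Fin.castLE hKM))ᴴ * Q.submatrix id (Fin.castLE hKM)) i j
      = (Qᴴ * Q) (Fin.castLE hKM i) (Fin.castLE hKM j) := by
    simp [Matrix.mul_apply, Matrix.conjTranspose_apply]
  rw [hentry, horth]
  simp [Matrix.one_apply, Fin.castLE_inj]
end

section
/- Let A be a P×M complex matrix with ordered column rank K > 0 and A = QR a QR decomposition. Then for every k with 1 ≤ k ≤ K, the column span of the first k columns of Q equals the column span of the first k columns of A. -/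
open Matrix

/-! Column `j` of `Q * U` is `∑ i, U i j • Q.col i`, and for upper triangular `U` only the
indices `i ≤ j` contribute; so the first `k` columns of `Q * U` lie in the span of the first `k`
columns of `Q`. When the first `k` columns of `A = Q * U` are linearly independent, that span
inclusion is an equality, since the smaller side already has dimension `k`. -/

namespace Matrix

theorem span_col_castLE_mul_le {m R : Type*} [CommSemiring R] {M k : ℕ}
    (Q : Matrix m (Fin M) R) {U : Matrix (Fin M) (Fin M) R} (hU : U.BlockTriangular id)
    (hk : k ≤ M) :
    Submodule.span R (Set.range ((Q * U).col ∘ Fin.castLE hk)) ≤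
      Submodule.span R (Set.range (Q.col ∘ Fin.castLE hk)) := by
  rw [Submodule.span_le]
  rintro _ ⟨j, rfl⟩
  have hcol : (Q * U).col (Fin.castLE hk j) = ∑ i, U i (Fin.castLE hk j) • Q.col i := by
    ext p
    simp only [col_apply, mul_apply, Finset.sum_apply, Pi.smul_apply, smul_eq_mul, mul_comm]
  rw [Function.comp_apply, hcol]
  refine Submodule.sum_mem _ fun i _ => ?_
  by_cases hi : (i : ℕ) < k
  · exact Submodule.smul_mem _ _ (Submodule.subset_span ⟨⟨i, hi⟩, rfl⟩)
  · have hji : Fin.castLE hk j < i := Fin.lt_def.mpr (j.isLt.trans_le (not_lt.mp hi))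
    rw [show U i (Fin.castLE hk j) = 0 from hU hji, zero_smul]
    exact Submodule.zero_mem _

theorem linearIndependent_col_of_rank_eq_card {m n R : Type*} [Field R] [Fintype n]
    {A : Matrix m n R} (h : A.rank = Fintype.card n) : LinearIndependent R A.col :=
  linearIndependent_iff_card_eq_finrank_span.mpr (h.symm.trans A.rank_eq_finrank_span_cols)

end Matrix

theorem linearIndependent_col_castLE_of_firstColsRank_eq {P M K : ℕ}
    (A : Matrix (Fin P) (Fin M) ℂ) (hKM : K ≤ M) (hK : firstColsRank A K = K) :
    LinearIndependent ℂ (A.col ∘ Fin.castLE hKM) := by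
  have hmin : K = min K M := (min_eq_left hKM).symm
  have hfirst := linearIndependent_col_of_rank_eq_card <|
    hK.trans (by rw [Fintype.card_fin, ← hmin])
  exact hfirst.comp (Fin.castLE hmin.le) (Fin.castLE_injective _)

theorem Submodule.span_range_eq_of_linearIndependent_of_le {K V ι : Type*} [DivisionRing K]
    [AddCommGroup V] [Module K V] [Fintype ι] {v w : ι → V} (hv : LinearIndependent K v)
    (hle : Submodule.span K (Set.range v) ≤ Submodule.span K (Set.range w)) :
    Submodule.span K (Set.range v) = Submodule.span K (Set.range w) := by
  have := FiniteDimensional.span_of_finite K (Set.finite_range w)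
  refine Submodule.eq_of_le_of_finrank_le hle ?_
  rw [finrank_span_eq_card hv]
  exact finrank_range_le_card w

theorem qr_span_first_k_columns_general {P M K : ℕ}
    (A Q : Matrix (Fin P) (Fin M) ℂ) (R : Matrix (Fin M) (Fin M) ℂ)
    (hK : OrderedColRank A K) (hKM : K ≤ M)
    (hQR : IsQR A Q R) :
    ∀ k : ℕ, 1 ≤ k → ∀ hk : k ≤ K,
      Submodule.span ℂ (Set.range fun i : Fin k => fun p : Fin P =>
          Q p (Fin.castLE (le_trans hk hKM) i)) =
      Submodule.span ℂ (Set.range fun i : Fin k => fun p : Fin P =>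
          A p (Fin.castLE (le_trans hk hKM) i)) := by
  obtain ⟨hA, -, hR, -, -⟩ := hQR
  intro k _ hk
  have hindep : LinearIndependent ℂ (A.col ∘ Fin.castLE (hk.trans hKM)) :=
    (linearIndependent_col_castLE_of_firstColsRank_eq A hKM hK.2.1).comp (Fin.castLE hk)
      (Fin.castLE_injective hk)
  have hle := span_col_castLE_mul_le Q (fun i j hij => hR i j hij) (hk.trans hKM)
  rw [← hA] at hle
  exact (Submodule.span_range_eq_of_linearIndependent_of_le hindep hle).symm

theorem qr_span_first_k_columns {P M K : ℕ}
    (A Q : Matrix (Fin P) (Fin M) ℂ) (R : Matrix (Fin M) (Fin M) ℂ)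
    (hK : OrderedColRank A K) (hKpos : 0 < K) (hKM : K ≤ M)
    (hQR : IsQR A Q R) :
    ∀ k : ℕ, 1 ≤ k → ∀ hk : k ≤ K,
      Submodule.span ℂ (Set.range fun i : Fin k => fun p : Fin P =>
          Q p (Fin.castLE (le_trans hk hKM) i)) =
      Submodule.span ℂ (Set.range fun i : Fin k => fun p : Fin P =>
          A p (Fin.castLE (le_trans hk hKM) i)) :=
  qr_span_first_k_columns_general A Q R hK hKM hQR
end

section
/- Let A be a P×M complex matrix with ordered column rank K satisfying K < M, and A = QR a QR decomposition. Then the diagonal entry R_{K+1,K+1} equals 0. -/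
/-! Row `K` of `R = Qᴴ A` is the linear functional `x ↦ ⟪q_K, x⟫` applied to the columns of `A`,
and upper triangularity says it vanishes on the first `K` columns. If it did not vanish on column
`K` as well, that column would lie outside the span of the first `K` columns, which are
independent; the first `K + 1` columns would then be independent, contradicting the maximality
of `K`. -/

open Matrix

theorem LinearIndependent.of_init_of_functional {K V : Type*} [Field K] [AddCommGroup V]
    [Module K V] {n : ℕ} {v : Fin (n + 1) → V} (hv : LinearIndependent K (Fin.init v))
    (φ : V →ₗ[K] K) (hφ : ∀ j : Fin n, φ (v j.castSucc) = 0) (hlast : φ (v (Fin.last n)) ≠ 0) :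
    LinearIndependent K v := by
  refine linearIndependent_finSucc'.2 ⟨hv, fun hmem => hlast ?_⟩
  have hspan : Submodule.span K (Set.range (Fin.init v)) ≤ LinearMap.ker φ := by
    rw [Submodule.span_le]
    rintro _ ⟨j, rfl⟩
    exact hφ j
  exact hspan hmem

theorem Matrix.rank_eq_card_iff_linearIndependent_col {m n R : Type*} [Field R] [Fintype n]
    (B : Matrix m n R) : B.rank = Fintype.card n ↔ LinearIndependent R B.col := by
  rw [rank_eq_finrank_span_cols, linearIndependent_iff_card_eq_finrank_span, Set.finrank, eq_comm]

theorem firstColsRank_eq_self_iff {P M : ℕ} (A : Matrix (Fin P) (Fin M) ℂ) {k : ℕ}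
    (hk : k ≤ M) : firstColsRank A k = k ↔ LinearIndependent ℂ (A.col ∘ Fin.castLE hk) := by
  have hmin : min k M = k := min_eq_left hk
  have hcols := (Matrix.of fun (p : Fin P) (j : Fin (min k M)) =>
    A p (Fin.castLE (min_le_right k M) j)).rank_eq_card_iff_linearIndependent_col
  rw [Fintype.card_fin] at hcols
  calc firstColsRank A k = k ↔ firstColsRank A k = min k M := by rw [hmin]
    _ ↔ _ := hcols
    _ ↔ _ := linearIndependent_equiv' (finCongr hmin) rfl

theorem qr_diag_zero_at_K_succ {P M K : ℕ}
    (A Q : Matrix (Fin P) (Fin M) ℂ) (R : Matrix (Fin M) (Fin M) ℂ)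
    (hK : OrderedColRank A K) (hKM : K < M)
    (hQR : IsQR A Q R) :
    R ⟨K, hKM⟩ ⟨K, hKM⟩ = 0 := by
  obtain ⟨hKle, hrank, hmax⟩ := hK
  obtain ⟨-, -, hupper, -, hR⟩ := hQR
  by_contra hdiag
  refine hmax (K + 1) K.lt_succ_self hKM ((firstColsRank_eq_self_iff A hKM).2 ?_)
  let φ : (Fin P → ℂ) →ₗ[ℂ] ℂ := LinearMap.proj ⟨K, hKM⟩ ∘ₗ Qᴴ.mulVecLin
  have hφ : ∀ j, φ (A.col j) = R ⟨K, hKM⟩ j := fun j => by rw [hR]; rfl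
  refine LinearIndependent.of_init_of_functional ?_ φ (fun j => ?_) ?_
  · exact (firstColsRank_eq_self_iff A hKle).1 hrank
  · rw [Function.comp_apply, hφ]
    exact hupper _ _ j.isLt
  · rwa [Function.comp_apply, hφ]
end

section
/- Let A be a P×M complex matrix with ordered column rank K > 0 and let Q₁R₁ and Q₂R₂ be two QR decompositions of A (in the generalized sense). Then the first K columns of Q₁ equal the first K columns of Q₂, and the first K rows of R₁ equal the first K rows of R₂. -/
open Matrix

section Aux

variable {P M : ℕ}

/-- Column decomposition from `A = Q * R` with `R` upper triangular. -/
lemma qr_col_sum {A Q : Matrix (Fin P) (Fin M) ℂ} {R : Matrix (Fin M) (Fin M) ℂ}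
    (hA : A = Q * R) (htri : ∀ i j : Fin M, j < i → R i j = 0) (c : Fin M) (p : Fin P) :
    A p c = ∑ i ∈ Finset.Iic c, Q p i * R i c := by
  rw [hA, Matrix.mul_apply]
  rw [← Finset.sum_filter_add_sum_filter_not Finset.univ (· ∈ Finset.Iic c)]
  have h1 : Finset.filter (· ∈ Finset.Iic c) Finset.univ = Finset.Iic c := by
    ext i; simp
  have h2 : ∑ i ∈ Finset.filter (¬ · ∈ Finset.Iic c) Finset.univ, Q p i * R i c = 0 := by
    apply Finset.sum_eq_zero
    intro i hi
    simp only [Finset.mem_filter, Finset.mem_Iic, not_le] at hi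
    rw [htri i c hi.2, mul_zero]
  rw [h1, h2, add_zero]

lemma qr_col_mem_span {A Q : Matrix (Fin P) (Fin M) ℂ} {R : Matrix (Fin M) (Fin M) ℂ}
    {c J : Fin M} {s : Finset (Fin M)} (hs : s ⊆ Finset.Iio J)
    (h : ∀ p, A p c = ∑ i ∈ s, Q p i * R i c) :
    (fun p => A p c) ∈ Submodule.span ℂ
      (((Finset.Iio J).image (fun i (p : Fin P) => Q p i) : Finset (Fin P → ℂ)) : Set (Fin P → ℂ)) := by
  have : (fun p => A p c) = ∑ i ∈ s, R i c • (fun p => Q p i) := by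
    funext p
    rw [h p, Finset.sum_apply]
    exact Finset.sum_congr rfl fun i _ => by simp [mul_comm]
  rw [this]
  apply Submodule.sum_mem
  intro i hi
  apply Submodule.smul_mem
  apply Submodule.subset_span
  simp only [Finset.coe_image, Set.mem_image, Finset.mem_coe]
  exact ⟨i, hs hi, rfl⟩

end Aux

theorem qr_first_K_unique {P M K : ℕ}
    (A Q₁ Q₂ : Matrix (Fin P) (Fin M) ℂ) (R₁ R₂ : Matrix (Fin M) (Fin M) ℂ)
    (hK : OrderedColRank A K) (hKpos : 0 < K)
    (hQR₁ : IsQR A Q₁ R₁) (hQR₂ : IsQR A Q₂ R₂) :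
    (∀ (p : Fin P) (j : Fin M), (j : ℕ) < K → Q₁ p j = Q₂ p j) ∧
    (∀ (i j : Fin M), (i : ℕ) < K → R₁ i j = R₂ i j) := by
  obtain ⟨hKM, hrank, -⟩ := hK
  obtain ⟨hA₁, horth₁, htri₁, hdiag₁, hRe₁⟩ := hQR₁
  obtain ⟨hA₂, horth₂, htri₂, hdiag₂, hRe₂⟩ := hQR₂
  simp only [firstColsRank] at hrank
  -- linear independence of the first K columns of A
  have hli : LinearIndependent ℂ (fun (i : Fin K) (p : Fin P) =>
      A p (⟨i.1, lt_of_lt_of_le i.2 hKM⟩ : Fin M)) := by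
    have hB : LinearIndependent ℂ (fun (j : Fin (min K M)) (p : Fin P) =>
        A p (Fin.castLE (min_le_right K M) j)) := by
      rw [linearIndependent_iff_card_eq_finrank_span, Set.finrank]
      have := (Matrix.of fun (p : Fin P) (j : Fin (min K M)) =>
        A p (Fin.castLE (min_le_right K M) j)).rank_eq_finrank_span_cols
      rw [hrank] at this
      exact (by simp [min_eq_left hKM] : Fintype.card (Fin (min K M)) = K).trans this
    exact hB.comp (fun i : Fin K => (finCongr (min_eq_left hKM).symm) i)
      ((finCongr (min_eq_left hKM).symm).injective)
  -- entrywise formula for R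
  have hRent : ∀ (Q : Matrix (Fin P) (Fin M) ℂ) (R : Matrix (Fin M) (Fin M) ℂ),
      R = Qᴴ * A → ∀ i c : Fin M, R i c = ∑ p, (starRingEnd ℂ) (Q p i) * A p c := by
    intro Q R hR i c
    rw [hR, Matrix.mul_apply]
    simp [Matrix.conjTranspose_apply]
  -- main induction : columns of Q agree up to K
  have main : ∀ n : ℕ, n < K → ∀ j : Fin M, (j : ℕ) = n → ∀ p, Q₁ p j = Q₂ p j := by
    intro n
    induction n using Nat.strong_induction_on with
    | _ n IH =>
    intro hnK j hj
    have hRlt : ∀ i : Fin M, (i : ℕ) < n → ∀ c : Fin M, R₁ i c = R₂ i c := by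
      intro i hi c
      rw [hRent Q₁ R₁ hRe₁ i c, hRent Q₂ R₂ hRe₂ i c]
      exact Finset.sum_congr rfl fun p _ => by
        rw [IH i.1 hi (hi.trans hnK) i rfl p]
    have hsum₁ : ∀ p, A p j = Q₁ p j * R₁ j j + ∑ i ∈ Finset.Iio j, Q₁ p i * R₁ i j := by
      intro p
      rw [qr_col_sum hA₁ htri₁ j p, ← Finset.Iio_insert,
        Finset.sum_insert Finset.notMem_Iio_self]
    have hsum₂ : ∀ p, A p j = Q₂ p j * R₂ j j + ∑ i ∈ Finset.Iio j, Q₂ p i * R₂ i j := by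
      intro p
      rw [qr_col_sum hA₂ htri₂ j p, ← Finset.Iio_insert,
        Finset.sum_insert Finset.notMem_Iio_self]
    have hsumeq : ∀ p, ∑ i ∈ Finset.Iio j, Q₂ p i * R₂ i j
        = ∑ i ∈ Finset.Iio j, Q₁ p i * R₁ i j := by
      intro p
      apply Finset.sum_congr rfl
      intro i hi
      have hi' : (i : ℕ) < n := by
        rw [← hj]; exact Fin.lt_def.mp (Finset.mem_Iio.mp hi)
      rw [IH i.1 hi' (hi'.trans hnK) i rfl p, hRlt i hi' j]
    set v : Fin P → ℂ := fun p => A p j - ∑ i ∈ Finset.Iio j, Q₁ p i * R₁ i j with hv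
    have h1 : ∀ p, Q₁ p j * R₁ j j = v p := by
      intro p; simp only [hv]; rw [hsum₁ p]; ring
    have h2 : ∀ p, Q₂ p j * R₂ j j = v p := by
      intro p; simp only [hv]; rw [hsum₂ p, hsumeq p]; ring
    have hvne : v ≠ 0 := by
      intro hv0
      have hAj : ∀ p, A p j = ∑ i ∈ Finset.Iio j, Q₁ p i * R₁ i j := by
        intro p
        have := congrFun hv0 p
        simp only [hv, Pi.zero_apply, sub_eq_zero] at this
        exact this
      set w : Finset (Fin P → ℂ) := (Finset.Iio j).image (fun i (p : Fin P) => Q₁ p i) with hw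
      have hjlt : ∀ i : Fin (n+1), (i : ℕ) < M :=
        fun i => lt_of_lt_of_le (lt_of_le_of_lt (Nat.lt_succ_iff.mp i.2) hnK) hKM
      have hsub : Set.range (fun (i : Fin (n+1)) (p : Fin P) =>
          A p (⟨i.1, hjlt i⟩ : Fin M))
          ⊆ (Submodule.span ℂ (w : Set (Fin P → ℂ)) : Set (Fin P → ℂ)) := by
        rintro - ⟨i, rfl⟩
        show (fun p => A p (⟨i.1, hjlt i⟩ : Fin M)) ∈ (Submodule.span ℂ (w : Set (Fin P → ℂ)) : Set (Fin P → ℂ))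
        rcases lt_or_eq_of_le (Nat.lt_succ_iff.mp i.2) with hlt | heq
        · refine qr_col_mem_span (J := j) (s := Finset.Iic (⟨i.1, hjlt i⟩ : Fin M)) ?_
            (fun p => qr_col_sum hA₁ htri₁ _ p)
          intro l hl
          rw [Finset.mem_Iio]
          exact lt_of_le_of_lt (Finset.mem_Iic.mp hl)
            (show (⟨i.1, hjlt i⟩ : Fin M) < j by rw [Fin.lt_def, hj]; exact hlt)
        · have hcj : (⟨i.1, hjlt i⟩ : Fin M) = j := Fin.ext (by rw [hj]; exact heq)
          rw [hcj]
          exact qr_col_mem_span (le_refl _) hAj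
      have hind : LinearIndependent ℂ (fun (i : Fin (n+1)) (p : Fin P) =>
          A p (⟨i.1, hjlt i⟩ : Fin M)) :=
        hli.comp (fun i : Fin (n+1) =>
            (⟨i.1, lt_of_le_of_lt (Nat.lt_succ_iff.mp i.2) hnK⟩ : Fin K))
          (fun a b hab => by simpa [Fin.ext_iff] using hab)
      have hcard := linearIndependent_le_span' _ hind (w : Set (Fin P → ℂ)) hsub
      rw [Cardinal.mk_fintype] at hcard
      simp only [Fintype.card_fin, Fintype.card_coe] at hcard
      have hcard' : n + 1 ≤ Fintype.card {x // x ∈ w} := by exact_mod_cast hcard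
      rw [Fintype.card_coe] at hcard'
      have hwc : w.card ≤ n := by
        calc w.card ≤ (Finset.Iio j).card := Finset.card_image_le
        _ = n := by rw [Fin.card_Iio, hj]
      omega
    obtain ⟨p₀, hp₀⟩ : ∃ p, v p ≠ 0 := by
      by_contra h
      push_neg at h
      exact hvne (funext h)
    have hr₁ : R₁ j j ≠ 0 := by
      intro h0
      exact hp₀ (by rw [← h1 p₀, h0, mul_zero])
    have hr₂ : R₂ j j ≠ 0 := by
      intro h0
      exact hp₀ (by rw [← h2 p₀, h0, mul_zero])
    have hq₁ne : (fun p => Q₁ p j) ≠ 0 := by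
      intro h0
      exact hp₀ (by rw [← h1 p₀, show Q₁ p₀ j = 0 from congrFun h0 p₀, zero_mul])
    have hq₂ne : (fun p => Q₂ p j) ≠ 0 := by
      intro h0
      exact hp₀ (by rw [← h2 p₀, show Q₂ p₀ j = 0 from congrFun h0 p₀, zero_mul])
    have hn₁ : ∑ p, (starRingEnd ℂ) (Q₁ p j) * Q₁ p j = 1 := by
      have := horth₁ j j hq₁ne hq₁ne
      simpa [Matrix.mul_apply, Matrix.conjTranspose_apply] using this
    have hn₂ : ∑ p, (starRingEnd ℂ) (Q₂ p j) * Q₂ p j = 1 := by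
      have := horth₂ j j hq₂ne hq₂ne
      simpa [Matrix.mul_apply, Matrix.conjTranspose_apply] using this
    have hvv₁ : ∑ p, (starRingEnd ℂ) (v p) * v p = (starRingEnd ℂ) (R₁ j j) * R₁ j j := by
      calc ∑ p, (starRingEnd ℂ) (v p) * v p
          = ∑ p, (starRingEnd ℂ) (R₁ j j) * R₁ j j * ((starRingEnd ℂ) (Q₁ p j) * Q₁ p j) := by
            refine Finset.sum_congr rfl fun p _ => ?_
            rw [← h1 p, _root_.map_mul]; ring
        _ = (starRingEnd ℂ) (R₁ j j) * R₁ j j := by rw [← Finset.mul_sum, hn₁, mul_one]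
    have hvv₂ : ∑ p, (starRingEnd ℂ) (v p) * v p = (starRingEnd ℂ) (R₂ j j) * R₂ j j := by
      calc ∑ p, (starRingEnd ℂ) (v p) * v p
          = ∑ p, (starRingEnd ℂ) (R₂ j j) * R₂ j j * ((starRingEnd ℂ) (Q₂ p j) * Q₂ p j) := by
            refine Finset.sum_congr rfl fun p _ => ?_
            rw [← h2 p, _root_.map_mul]; ring
        _ = (starRingEnd ℂ) (R₂ j j) * R₂ j j := by rw [← Finset.mul_sum, hn₂, mul_one]
    have hc₁ : (starRingEnd ℂ) (R₁ j j) = R₁ j j := Complex.conj_eq_iff_im.mpr (hdiag₁ j).1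
    have hc₂ : (starRingEnd ℂ) (R₂ j j) = R₂ j j := Complex.conj_eq_iff_im.mpr (hdiag₂ j).1
    have hsq : R₁ j j * R₁ j j = R₂ j j * R₂ j j := by
      have h' := hvv₁.symm.trans hvv₂
      rwa [hc₁, hc₂] at h'
    have hre₁ : R₁ j j = ((R₁ j j).re : ℂ) :=
      (Complex.ext_iff).mpr ⟨by simp, by simp [(hdiag₁ j).1]⟩
    have hre₂ : R₂ j j = ((R₂ j j).re : ℂ) :=
      (Complex.ext_iff).mpr ⟨by simp, by simp [(hdiag₂ j).1]⟩
    have hrr : R₁ j j = R₂ j j := by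
      rw [hre₁, hre₂] at hsq ⊢
      have h' : (R₁ j j).re * (R₁ j j).re = (R₂ j j).re * (R₂ j j).re := by
        exact_mod_cast hsq
      rcases mul_self_eq_mul_self_iff.mp h' with h | h
      · rw [h]
      · have := (hdiag₁ j).2
        have := (hdiag₂ j).2
        have : (R₁ j j).re = (R₂ j j).re := by linarith
        rw [this]
    intro p
    have hfin : Q₁ p j * R₂ j j = Q₂ p j * R₂ j j := by
      rw [← hrr, h1 p, hrr, ← h2 p]
    exact mul_right_cancel₀ hr₂ hfin
  constructor
  · intro p j hjK
    exact main j.1 hjK j rfl p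
  · intro i c hiK
    rw [hRent Q₁ R₁ hRe₁ i c, hRent Q₂ R₂ hRe₂ i c]
    exact Finset.sum_congr rfl fun p _ => by rw [main i.1 hiK i rfl p]
end

section
/- Let A(s) be a P×M Laurent polynomial matrix on the unit circle with A(s) ∼ (V₁, V₂) and V = V₁ + V₂. Suppose for each s on the unit circle, Q(s), R(s) are QR factors of A(s) (generalized sense), and define Δ₀(s)=1, Δ_k(s) = Δ_{k−1}(s)·R_{k,k}(s)², q̃_k(s) = Δ_{k−1}(s)·R_{k,k}(s)·q_k(s), r̃_k(s)ᵀ = Δ_{k−1}(s)·R_{k,k}(s)·r_k(s)ᵀ. Then: Δ_k(s) ∼ (kV, kV), q̃_k(s) ∼ ((k−1)V + V₁, (k−1)V + V₂), and r̃_k(s)ᵀ ∼ (kV, kV), i.e., each is a Laurent polynomial (vector) of the indicated degree bounds on the unit circle. -/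
open Matrix

/-- `f` is a Laurent polynomial of type `(W₁, W₂)` on the unit circle:
`f s = ∑_{v=-W₁}^{W₂} c v * s^(-v)` for all `s` with `|s| = 1`. -/
def IsLP (W₁ W₂ : ℕ) (f : ℂ → ℂ) : Prop :=
  ∃ c : ℤ → ℂ, ∀ s : ℂ, ‖s‖ = 1 →
    f s = ∑ v ∈ Finset.Icc (-(W₁ : ℤ)) (W₂ : ℤ), c v * s ^ (-v)

/-!
On the unit circle `conj s = s⁻¹`, so the entries of the Gram matrix `Aᴴ A` are Laurent
polynomials of type `(V, V)`, and a determinant of a matrix whose `i`-th row has type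
`(u i, w i)` has type `(∑ u, ∑ w)`. It therefore suffices to write each mapped factor as such a
determinant. From `A = Q R` and `R = Qᴴ A` we get `Aᴴ A = Rᴴ R`, and since `R` is upper
triangular with real diagonal, minors of `Aᴴ A` and of the stacked matrix `[Aᴴ A; A]` on the
leading index set `{0, …, k}` split into products of two triangular determinants:
* `r̃_k(s)_j` is the minor of `Aᴴ A` with rows `0, …, k` and columns `0, …, k - 1, j`;
* `q̃_k(s)_p` is the minor with rows `0, …, k - 1` of `Aᴴ A`, row `p` of `A`, columns `0, …, k`;
* `Δ_{k+1} = r̃_k(s)_k`.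
The index set `{0, …, k}` is the subtype `Finset.Iic k`, and replacing its last column (row) is
`Function.update … k …`.
-/

namespace Matrix

theorem IsUpperTriangular.conjTranspose {m α : Type*} [LT m] [AddMonoid α] [StarAddMonoid α]
    {U : Matrix m m α} (hU : U.IsUpperTriangular) : Uᴴ.IsLowerTriangular :=
  fun i j (hij : i < j) => by rw [conjTranspose_apply, hU hij, star_zero]

variable {m κ ι α : Type*} [LinearOrder m] [LocallyFiniteOrderBot m]

theorem submatrix_mul_of_isUpperTriangular [Fintype m] [NonUnitalNonAssocSemiring α]
    {U : Matrix m m α} (hU : U.IsUpperTriangular) (N : Matrix κ m α) (r : ι → κ) (k : m) :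
    (N * U).submatrix r (Subtype.val : Finset.Iic k → m) =
      N.submatrix r (Subtype.val : Finset.Iic k → m) *
        U.submatrix (Subtype.val : Finset.Iic k → m) (Subtype.val : Finset.Iic k → m) := by
  ext a b
  simp only [submatrix_apply, mul_apply]
  rw [Finset.sum_coe_sort (Finset.Iic k) (fun i => N (r a) i * U i b)]
  refine (Finset.sum_subset (Finset.subset_univ _) fun i _ hi => ?_).symm
  have hbi : b.1 < i := lt_of_le_of_lt (Finset.mem_Iic.1 b.2) (by simpa using hi)
  rw [hU hbi, mul_zero]

theorem submatrix_mul_of_isLowerTriangular [Fintype m] [NonUnitalNonAssocSemiring α]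
    {L : Matrix m m α} (hL : L.IsLowerTriangular) (N : Matrix m κ α) (c : ι → κ) (k : m) :
    (L * N).submatrix (Subtype.val : Finset.Iic k → m) c =
      L.submatrix (Subtype.val : Finset.Iic k → m) (Subtype.val : Finset.Iic k → m) *
        N.submatrix (Subtype.val : Finset.Iic k → m) c := by
  ext a b
  simp only [submatrix_apply, mul_apply]
  rw [Finset.sum_coe_sort (Finset.Iic k) (fun i => L a i * N i (c b))]
  refine (Finset.sum_subset (Finset.subset_univ _) fun i _ hi => ?_).symm
  have hai : a.1 < i := lt_of_le_of_lt (Finset.mem_Iic.1 a.2) (by simpa using hi)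
  rw [hL (show OrderDual.toDual i < OrderDual.toDual a.1 from hai), zero_mul]

theorem det_submatrix_Iic_update [CommRing α] {U : Matrix m m α} (hU : U.IsUpperTriangular)
    (k j : m) :
    (U.submatrix (Subtype.val : Finset.Iic k → m) (Function.update id k j ∘ Subtype.val)).det =
      (∏ i ∈ Finset.Iio k, U i i) * U k j := by
  have hT : (U.submatrix (Subtype.val : Finset.Iic k → m)
      (Function.update id k j ∘ Subtype.val)).IsUpperTriangular := by
    intro a b (hba : b.1 < a.1)
    have hbk : b.1 ≠ k := (lt_of_lt_of_le hba (Finset.mem_Iic.1 a.2)).ne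
    simpa [hbk] using hU hba
  rw [det_of_isUpperTriangular hT]
  simp only [submatrix_apply, Function.comp_apply]
  rw [Finset.prod_coe_sort (Finset.Iic k) (fun i => U i (Function.update id k j i)),
    ← Finset.prod_Iio_mul_eq_prod_Iic]
  congr 1
  · exact Finset.prod_congr rfl fun i hi => by simp [(Finset.mem_Iio.1 hi).ne]
  · simp

theorem det_fromRows_submatrix_Iic_update [CommRing α] {L : Matrix m m α}
    (hL : L.IsLowerTriangular) (B : Matrix κ m α) (k : m) (p : κ) :
    ((fromRows L B).submatrix (Function.update Sum.inl k (Sum.inr p) ∘ Subtype.val)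
      (Subtype.val : Finset.Iic k → m)).det = (∏ i ∈ Finset.Iio k, L i i) * B p k := by
  have hT : ((fromRows L B).submatrix (Function.update Sum.inl k (Sum.inr p) ∘ Subtype.val)
      (Subtype.val : Finset.Iic k → m)).IsLowerTriangular := by
    intro a b (hab : a.1 < b.1)
    have hak : a.1 ≠ k := (lt_of_lt_of_le hab (Finset.mem_Iic.1 b.2)).ne
    simpa [hak] using hL (show OrderDual.toDual b.1 < OrderDual.toDual a.1 from hab)
  rw [det_of_isLowerTriangular _ hT]
  simp only [submatrix_apply, Function.comp_apply]
  rw [Finset.prod_coe_sort (Finset.Iic k)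
      (fun i => fromRows L B (Function.update Sum.inl k (Sum.inr p) i) i),
    ← Finset.prod_Iio_mul_eq_prod_Iic]
  congr 1
  · exact Finset.prod_congr rfl fun i hi => by simp [(Finset.mem_Iio.1 hi).ne]
  · simp

theorem det_submatrix_Iic [CommRing α] {U : Matrix m m α} (hU : U.IsUpperTriangular) (k : m) :
    (U.submatrix (Subtype.val : Finset.Iic k → m) (Subtype.val : Finset.Iic k → m)).det =
      (∏ i ∈ Finset.Iio k, U i i) * U k k := by
  have h := det_submatrix_Iic_update hU k k
  rwa [show Function.update id k k = id from Function.update_eq_self k id, Function.id_comp] at h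

end Matrix

section IsLP

variable {W₁ W₂ : ℕ} {f g : ℂ → ℂ}

theorem IsLP.congr (hf : IsLP W₁ W₂ f) (h : ∀ s : ℂ, ‖s‖ = 1 → f s = g s) : IsLP W₁ W₂ g := by
  obtain ⟨c, hc⟩ := hf
  exact ⟨c, fun s hs => (h s hs).symm.trans (hc s hs)⟩

theorem isLP_const (a : ℂ) : IsLP 0 0 (fun _ => a) :=
  ⟨fun _ => a, fun s _ => by simp⟩

theorem isLP_of_eq_sum_zpow {ι : Type*} (T : Finset ι) (e : ι → ℂ) (d : ι → ℤ)
    (hd : ∀ i ∈ T, d i ∈ Finset.Icc (-(W₁ : ℤ)) W₂)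
    (hf : ∀ s : ℂ, ‖s‖ = 1 → f s = ∑ i ∈ T, e i * s ^ (-d i)) : IsLP W₁ W₂ f := by
  classical
  refine ⟨fun v => ∑ i ∈ T with d i = v, e i, fun s hs => ?_⟩
  rw [hf s hs, ← Finset.sum_fiberwise_of_maps_to hd]
  refine Finset.sum_congr rfl fun v _ => ?_
  rw [Finset.sum_mul]
  exact Finset.sum_congr rfl fun i hi => by rw [(Finset.mem_filter.1 hi).2]

theorem IsLP.mul {W₁' W₂' : ℕ} (hf : IsLP W₁ W₂ f) (hg : IsLP W₁' W₂' g) :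
    IsLP (W₁ + W₁') (W₂ + W₂') (fun s => f s * g s) := by
  obtain ⟨c, hc⟩ := hf
  obtain ⟨c', hc'⟩ := hg
  refine isLP_of_eq_sum_zpow (Finset.Icc (-(W₁ : ℤ)) W₂ ×ˢ Finset.Icc (-(W₁' : ℤ)) W₂')
    (fun v => c v.1 * c' v.2) (fun v => v.1 + v.2) ?_ fun s hs => ?_
  · rintro ⟨v, v'⟩ hv
    simp only [Finset.mem_product, Finset.mem_Icc] at hv ⊢
    push_cast
    omega
  · have hs0 : s ≠ 0 := norm_ne_zero_iff.1 (by rw [hs]; exact one_ne_zero)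
    rw [hc s hs, hc' s hs, Finset.sum_mul_sum, Finset.sum_product]
    refine Finset.sum_congr rfl fun v _ => Finset.sum_congr rfl fun v' _ => ?_
    rw [neg_add, zpow_add₀ hs0]
    ring

theorem IsLP.conj (hf : IsLP W₁ W₂ f) : IsLP W₂ W₁ (fun s => star (f s)) := by
  obtain ⟨c, hc⟩ := hf
  refine isLP_of_eq_sum_zpow (Finset.Icc (-(W₁ : ℤ)) W₂) (fun v => star (c v)) (fun v => -v)
    (fun v hv => by simp only [Finset.mem_Icc] at hv ⊢; omega) fun s hs => ?_
  have hconj : star s = s⁻¹ := (Complex.inv_eq_conj hs).symm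
  rw [hc s hs, star_sum]
  refine Finset.sum_congr rfl fun v _ => ?_
  rw [star_mul', star_zpow₀, hconj, _root_.inv_zpow', neg_neg]

theorem isLP_sum {ι : Type*} (T : Finset ι) {F : ι → ℂ → ℂ} (h : ∀ i ∈ T, IsLP W₁ W₂ (F i)) :
    IsLP W₁ W₂ (fun s => ∑ i ∈ T, F i s) := by
  choose c hc using h
  refine ⟨fun v => ∑ i ∈ T.attach, c i.1 i.2 v, fun s hs => ?_⟩
  simp only [Finset.sum_mul]
  rw [Finset.sum_comm, ← Finset.sum_attach T]
  exact Finset.sum_congr rfl fun i _ => hc i.1 i.2 s hs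

theorem isLP_prod {ι : Type*} (T : Finset ι) (u w : ι → ℕ) {F : ι → ℂ → ℂ}
    (h : ∀ i ∈ T, IsLP (u i) (w i) (F i)) :
    IsLP (∑ i ∈ T, u i) (∑ i ∈ T, w i) (fun s => ∏ i ∈ T, F i s) := by
  induction T using Finset.cons_induction with
  | empty => simpa using isLP_const 1
  | cons a T ha ih =>
    simp only [Finset.prod_cons, Finset.sum_cons]
    exact (h a (Finset.mem_cons_self a T)).mul (ih fun i hi => h i (Finset.mem_cons_of_mem hi))

theorem isLP_det {n : Type*} [Fintype n] [DecidableEq n] (u w : n → ℕ)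
    {X : ℂ → Matrix n n ℂ} (h : ∀ i j, IsLP (u i) (w i) (fun s => X s i j)) :
    IsLP (∑ i, u i) (∑ i, w i) (fun s => (X s).det) := by
  refine (isLP_sum Finset.univ fun σ _ => ?_).congr fun s _ => (det_apply' (X s)).symm
  have hprod := isLP_prod Finset.univ (u ∘ σ) (w ∘ σ) fun i _ => h (σ i) i
  rw [Function.comp_def, Function.comp_def, Equiv.sum_comp σ u, Equiv.sum_comp σ w] at hprod
  simpa using (isLP_const ((Equiv.Perm.sign σ : ℤ) : ℂ)).mul hprod

theorem isLP_det_of_forall {n : Type*} [Fintype n] [DecidableEq n]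
    {X : ℂ → Matrix n n ℂ} (h : ∀ i j, IsLP W₁ W₂ (fun s => X s i j)) :
    IsLP (Fintype.card n * W₁) (Fintype.card n * W₂) (fun s => (X s).det) := by
  simpa using isLP_det (fun _ => W₁) (fun _ => W₂) h

theorem isLP_conjTranspose_mul_self_apply {κ n : Type*} [Fintype κ] {A : ℂ → Matrix κ n ℂ}
    (hA : ∀ p i, IsLP W₁ W₂ (fun s => A s p i)) (i j : n) :
    IsLP (W₁ + W₂) (W₁ + W₂) (fun s => ((A s)ᴴ * A s) i j) := by
  refine (isLP_sum (F := fun p s => star (A s p i) * A s p j) Finset.univ fun p _ => ?_).congr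
    fun s _ => by simp only [mul_apply, conjTranspose_apply]
  simpa only [add_comm W₂ W₁] using (hA p i).conj.mul (hA p j)

end IsLP

namespace IsQR

variable {P M : ℕ} {A Q : Matrix (Fin P) (Fin M) ℂ} {R : Matrix (Fin M) (Fin M) ℂ}

theorem conjTranspose_mul_self (h : IsQR A Q R) : Aᴴ * A = Rᴴ * R := by
  obtain ⟨hA, -, -, -, hR⟩ := h
  calc Aᴴ * A = (Qᴴ * A)ᴴ * R := by
        rw [conjTranspose_mul, conjTranspose_conjTranspose, Matrix.mul_assoc, ← hA]
    _ = Rᴴ * R := by rw [← hR]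

theorem isUpperTriangular (h : IsQR A Q R) : R.IsUpperTriangular :=
  fun i j hji => h.2.2.1 i j hji

theorem star_diag (h : IsQR A Q R) (i : Fin M) : star (R i i) = R i i :=
  Complex.conj_eq_iff_im.2 (h.2.2.2.1 i).1

theorem det_conjTranspose_mul_self_submatrix (h : IsQR A Q R) (k j : Fin M) :
    ((Aᴴ * A).submatrix (Subtype.val : Finset.Iic k → Fin M)
      (Function.update id k j ∘ Subtype.val)).det =
      (∏ i ∈ Finset.Iio k, R i i ^ 2) * R k k * R k j := by
  have hU := h.isUpperTriangular
  rw [h.conjTranspose_mul_self, submatrix_mul_of_isLowerTriangular hU.conjTranspose, det_mul,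
    ← conjTranspose_submatrix, det_conjTranspose, det_submatrix_Iic hU,
    det_submatrix_Iic_update hU, star_mul', star_prod, Finset.prod_pow]
  simp only [h.star_diag]
  ring

theorem det_fromRows_submatrix (h : IsQR A Q R) (k : Fin M) (p : Fin P) :
    ((fromRows (Aᴴ * A) A).submatrix (Function.update Sum.inl k (Sum.inr p) ∘ Subtype.val)
      (Subtype.val : Finset.Iic k → Fin M)).det =
      (∏ i ∈ Finset.Iio k, R i i ^ 2) * R k k * Q p k := by
  have hU := h.isUpperTriangular
  have hfactor : fromRows (Aᴴ * A) A = fromRows Rᴴ Q * R := by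
    rw [fromRows_mul, ← h.conjTranspose_mul_self, ← h.1]
  rw [hfactor, submatrix_mul_of_isUpperTriangular hU, det_mul,
    det_fromRows_submatrix_Iic_update hU.conjTranspose, det_submatrix_Iic hU, Finset.prod_pow]
  simp only [conjTranspose_apply, h.star_diag]
  ring

end IsQR

theorem isLP_det_submatrix_Iic_update {M W₁ W₂ : ℕ} {G : ℂ → Matrix (Fin M) (Fin M) ℂ}
    (hG : ∀ i j, IsLP W₁ W₂ (fun s => G s i j)) (k j : Fin M) :
    IsLP ((k + 1) * W₁) ((k + 1) * W₂) (fun s =>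
      ((G s).submatrix (Subtype.val : Finset.Iic k → Fin M)
        (Function.update id k j ∘ Subtype.val)).det) := by
  have h := isLP_det_of_forall (X := fun s => (G s).submatrix (Subtype.val : Finset.Iic k → Fin M)
    (Function.update id k j ∘ Subtype.val)) fun a b => hG a (Function.update id k j b)
  rwa [Fintype.card_coe, Fin.card_Iic] at h

theorem isLP_det_fromRows_submatrix_Iic_update {M P W V₁ V₂ : ℕ}
    {G : ℂ → Matrix (Fin M) (Fin M) ℂ} {B : ℂ → Matrix (Fin P) (Fin M) ℂ}
    (hG : ∀ i j, IsLP W W (fun s => G s i j)) (hB : ∀ p j, IsLP V₁ V₂ (fun s => B s p j))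
    (k : Fin M) (p : Fin P) :
    IsLP (k * W + V₁) (k * W + V₂) (fun s =>
      ((fromRows (G s) (B s)).submatrix (Function.update Sum.inl k (Sum.inr p) ∘ Subtype.val)
        (Subtype.val : Finset.Iic k → Fin M)).det) := by
  set r := Function.update (Sum.inl : Fin M → Fin M ⊕ Fin P) k (Sum.inr p)
  have hentry : ∀ x j, IsLP (Sum.elim (fun _ => W) (fun _ => V₁) x)
      (Sum.elim (fun _ => W) (fun _ => V₂) x) (fun s => fromRows (G s) (B s) x j) := by
    rintro (i | q) j
    · exact hG i j
    · exact hB q j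
  have hbound : ∀ V, ∑ a : Finset.Iic k, Sum.elim (fun _ => W) (fun _ => V) (r a) = k * W + V := by
    intro V
    rw [Finset.sum_coe_sort (Finset.Iic k) (fun i => Sum.elim (fun _ => W) (fun _ => V) (r i)),
      ← Finset.sum_Iio_add_eq_sum_Iic,
      Finset.sum_congr rfl (g := fun _ => W) fun i hi => by simp [r, (Finset.mem_Iio.1 hi).ne]]
    simp [r]
  have h := isLP_det (X := fun s => (fromRows (G s) (B s)).submatrix (r ∘ Subtype.val)
    (Subtype.val : Finset.Iic k → Fin M)) _ _ fun a b => hentry (r a) b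
  rwa [hbound, hbound] at h

/-- Indices are 0-based: `Δ_k(s) = ∏_{i ≤ k} R_{i,i}(s)²` is the `(k+1)`-th Δ of the
paper, and the `k`-th (0-based) column/row correspond to the `(k+1)`-th of the paper,
so that `q̃_k(s) = (∏_{i<k} R_{i,i}(s)²) R_{k,k}(s) q_k(s)` and
`r̃_k(s)ᵀ = (∏_{i<k} R_{i,i}(s)²) R_{k,k}(s) r_k(s)ᵀ`. -/
theorem qr_mapping_isLP {P M : ℕ} (V₁ V₂ : ℕ)
    (A : ℂ → Matrix (Fin P) (Fin M) ℂ)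
    (Q : ℂ → Matrix (Fin P) (Fin M) ℂ) (R : ℂ → Matrix (Fin M) (Fin M) ℂ)
    (hA : ∀ (p : Fin P) (m : Fin M), IsLP V₁ V₂ (fun s => A s p m))
    (hQR : ∀ s : ℂ, ‖s‖ = 1 → IsQR (A s) (Q s) (R s)) :
    (∀ k : ℕ, k ≤ M →
      IsLP (k * (V₁ + V₂)) (k * (V₁ + V₂)) (fun s =>
        ∏ i ∈ Finset.univ.filter (fun i : Fin M => (i : ℕ) < k), (R s i i) ^ 2)) ∧
    (∀ (k : Fin M) (p : Fin P),
      IsLP ((k : ℕ) * (V₁ + V₂) + V₁) ((k : ℕ) * (V₁ + V₂) + V₂) (fun s =>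
        (∏ i ∈ Finset.univ.filter (fun i : Fin M => i < k), (R s i i) ^ 2) *
          R s k k * Q s p k)) ∧
    (∀ (k j : Fin M),
      IsLP (((k : ℕ) + 1) * (V₁ + V₂)) (((k : ℕ) + 1) * (V₁ + V₂)) (fun s =>
        (∏ i ∈ Finset.univ.filter (fun i : Fin M => i < k), (R s i i) ^ 2) *
          R s k k * R s k j)) := by
  have hG := isLP_conjTranspose_mul_self_apply hA
  have hr : ∀ k j : Fin M, IsLP (((k : ℕ) + 1) * (V₁ + V₂)) (((k : ℕ) + 1) * (V₁ + V₂))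
      (fun s => (∏ i ∈ Finset.univ.filter (fun i : Fin M => i < k), (R s i i) ^ 2) *
        R s k k * R s k j) := fun k j =>
    (isLP_det_submatrix_Iic_update hG k j).congr fun s hs => by
      rw [(hQR s hs).det_conjTranspose_mul_self_submatrix, Finset.filter_gt_eq_Iio]
  refine ⟨?_, fun k p => ?_, hr⟩
  · rintro (_ | k) hk
    · simpa using isLP_const 1
    · have hIic : Finset.univ.filter (fun i : Fin M => (i : ℕ) < k + 1) = Finset.Iic ⟨k, hk⟩ := by
        ext i
        simp [Fin.le_def]
      refine (hr ⟨k, hk⟩ ⟨k, hk⟩).congr fun s _ => ?_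
      rw [hIic, ← Finset.prod_Iio_mul_eq_prod_Iic, Finset.filter_gt_eq_Iio]
      ring
  · exact (isLP_det_fromRows_submatrix_Iic_update hG hA k p).congr fun s hs => by
      rw [(hQR s hs).det_fromRows_submatrix, Finset.filter_gt_eq_Iio]
end

section
/- Let A(s) ∼ (V₁, V₂) be a P×M Laurent polynomial matrix on the unit circle, and for each s on the unit circle with ordered column rank of A(s) at least k ≥ 2, let y_k(s) be the k-th Gram–Schmidt residual of the columns of A(s), and set q̃_k(s) = Δ_{k−1}(s) y_k(s) with Δ_{k−1}(s) = Π_{i=1}^{k−1} y_i^H(s) y_i(s). Then q̃_k(s) = Σ_{i=1}^{k} (−1)^{k+i} det( A_{1..k−1}^H(s) · A_{1..k∖i}(s) ) a_i(s), where A_{1..k∖i}(s) is A_{1..k}(s) with its i-th column removed and a_i(s) is the i-th column of A(s). -/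
open Matrix

/-!
The cofactor vector `q = ∑ⱼ (-1)^(n+j) det(G_{<n, ĵ}) bⱼ` is the formal determinant of the Gram
matrix `G` of `b₀, …, bₙ` whose last row is replaced by the vectors `bⱼ`. Pairing it with `bᵣ`,
`r < n`, gives a determinant with a repeated row, so `q` is orthogonal to `b₀, …, bₙ₋₁`, and its
`bₙ`-coefficient is the Gram determinant `det G_{<n}`. The Gram–Schmidt vector `yₙ` is `bₙ` plus a
combination of `b₀, …, bₙ₋₁` and is orthogonal to them as well, so `q = det G_{<n} • yₙ`. Pairing
this with `bₙ` gives `det G_{≤n} = det G_{<n} · ‖yₙ‖²`, hence `det G_{<n} = ∏_{i<n} ‖yᵢ‖² = Δ`.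
-/

open Finset InnerProductSpace

theorem Fin.val_succAbove_eq_ite {n : ℕ} (i : Fin (n + 1)) (j : Fin n) :
    (i.succAbove j : ℕ) = if (j : ℕ) < i then (j : ℕ) else (j : ℕ) + 1 := by
  unfold Fin.succAbove
  split_ifs <;> simp_all [Fin.lt_def]

theorem prod_filter_val_lt_eq_prod_castLE {α : Type*} [CommMonoid α] {m M : ℕ} (h : m ≤ M)
    (f : Fin M → α) :
    ∏ i ∈ univ.filter (fun i : Fin M => (i : ℕ) < m), f i = ∏ i : Fin m, f (Fin.castLE h i) := by
  have hset : univ.filter (fun i : Fin M => (i : ℕ) < m) = univ.map (Fin.castLEEmb h) := by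
    ext x
    simp only [mem_filter, mem_univ, true_and, mem_map, Fin.castLEEmb_apply]
    exact ⟨fun hx => ⟨⟨x, hx⟩, rfl⟩, by rintro ⟨x, rfl⟩; simp⟩
  rw [hset, prod_map]
  rfl

namespace Matrix

variable {R : Type*} [CommRing R] {n : ℕ}

theorem det_eq_sum_last_row (M : Matrix (Fin (n + 1)) (Fin (n + 1)) R) :
    M.det = ∑ j : Fin (n + 1), (-1) ^ (n + (j : ℕ)) * M (Fin.last n) j *
      (M.submatrix Fin.castSucc j.succAbove).det := by
  simp only [det_succ_row M (Fin.last n), Fin.val_last, Fin.succAbove_last]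

end Matrix

section

variable {𝕜 E : Type*} [RCLike 𝕜] [NormedAddCommGroup E] [InnerProductSpace 𝕜 E]

local notation "⟪" x ", " y "⟫" => inner 𝕜 x y

theorem inner_eq_zero_of_mem_span_range {ι : Type*} {v : ι → E} {x z : E}
    (hz : z ∈ Submodule.span 𝕜 (Set.range v)) (h : ∀ i, ⟪v i, x⟫ = 0) : ⟪z, x⟫ = 0 := by
  refine (Submodule.isOrtho_span.2 ?_).inner_eq hz (Submodule.mem_span_singleton_self x)
  rintro _ ⟨i, rfl⟩ _ rfl
  exact h i

variable (𝕜) in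
/-- The paper's `q̃ₖ`, for `k = n + 1`. -/
noncomputable def cofactorVector {n : ℕ} (b : Fin (n + 1) → E) : E :=
  ∑ j : Fin (n + 1),
    ((-1) ^ (n + (j : ℕ)) * ((gram 𝕜 b).submatrix Fin.castSucc j.succAbove).det) • b j

variable {n : ℕ}

theorem inner_cofactorVector (b : Fin (n + 1) → E) (x : E) :
    ⟪x, cofactorVector 𝕜 b⟫ =
      ((gram 𝕜 b).updateRow (Fin.last n) fun j => ⟪x, b j⟫).det := by
  rw [det_eq_sum_last_row, cofactorVector, inner_sum]
  simp only [inner_smul_right, updateRow_self, ← Fin.succAbove_last,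
    submatrix_updateRow_succAbove]
  exact sum_congr rfl fun j _ => by ring

theorem inner_castSucc_cofactorVector (b : Fin (n + 1) → E) (r : Fin n) :
    ⟪b r.castSucc, cofactorVector 𝕜 b⟫ = 0 :=
  (inner_cofactorVector b _).trans (det_updateRow_eq_zero (Fin.castSucc_lt_last r).ne)

theorem inner_last_cofactorVector (b : Fin (n + 1) → E) :
    ⟪b (Fin.last n), cofactorVector 𝕜 b⟫ = (gram 𝕜 b).det := by
  rw [inner_cofactorVector]
  exact congrArg det (updateRow_eq_self _ _)

theorem cofactorVector_sub_smul_last_mem_span (b : Fin (n + 1) → E) :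
    cofactorVector 𝕜 b - (gram 𝕜 (b ∘ Fin.castSucc)).det • b (Fin.last n) ∈
      Submodule.span 𝕜 (Set.range (b ∘ Fin.castSucc)) := by
  have hsign : ((-1) ^ (n + n) : 𝕜) = 1 := by rw [← two_mul, pow_mul]; norm_num
  have hminor : (gram 𝕜 b).submatrix Fin.castSucc Fin.castSucc = gram 𝕜 (b ∘ Fin.castSucc) := rfl
  rw [cofactorVector, Fin.sum_univ_castSucc, Fin.val_last, Fin.succAbove_last, hsign, one_mul,
    hminor, add_sub_cancel_right]
  exact Submodule.sum_mem _ fun j _ => Submodule.smul_mem _ _ (Submodule.subset_span ⟨j, rfl⟩)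

theorem gramSchmidt_last_sub_mem_span (b : Fin (n + 1) → E) :
    gramSchmidt 𝕜 b (Fin.last n) - b (Fin.last n) ∈
      Submodule.span 𝕜 (Set.range (b ∘ Fin.castSucc)) := by
  rw [gramSchmidt_def, sub_sub_cancel_left]
  refine Submodule.neg_mem _ (Submodule.sum_mem _ fun i hi => ?_)
  rw [Submodule.starProjection_singleton]
  refine Submodule.smul_mem _ _ (Submodule.span_mono ?_ (gramSchmidt_mem_span 𝕜 b le_rfl))
  rintro _ ⟨j, hj, rfl⟩
  have hj : j ≠ Fin.last n := (lt_of_le_of_lt hj (mem_Iio.1 hi)).ne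
  exact ⟨j.castPred hj, congrArg b (Fin.castSucc_castPred j hj)⟩

theorem inner_castSucc_gramSchmidt_last (b : Fin (n + 1) → E) (r : Fin n) :
    ⟪b r.castSucc, gramSchmidt 𝕜 b (Fin.last n)⟫ = 0 := by
  rw [← inner_conj_symm, gramSchmidt_inv_triangular 𝕜 b (Fin.castSucc_lt_last r), map_zero]

theorem cofactorVector_eq_smul_gramSchmidt_last (b : Fin (n + 1) → E) :
    cofactorVector 𝕜 b = (gram 𝕜 (b ∘ Fin.castSucc)).det • gramSchmidt 𝕜 b (Fin.last n) := by
  set c := (gram 𝕜 (b ∘ Fin.castSucc)).det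
  -- The difference lies in the span of the `b r`, `r < n`, and is orthogonal to each of them.
  have hu : cofactorVector 𝕜 b - c • gramSchmidt 𝕜 b (Fin.last n) ∈
      Submodule.span 𝕜 (Set.range (b ∘ Fin.castSucc)) := by
    convert Submodule.sub_mem _ (cofactorVector_sub_smul_last_mem_span b)
      (Submodule.smul_mem _ c (gramSchmidt_last_sub_mem_span b)) using 1
    rw [smul_sub]
    abel
  have horth : ∀ r, ⟪(b ∘ Fin.castSucc) r, cofactorVector 𝕜 b - c • gramSchmidt 𝕜 b (Fin.last n)⟫
      = 0 := fun r => by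
    rw [Function.comp_apply, inner_sub_right, inner_smul_right, inner_castSucc_cofactorVector,
      inner_castSucc_gramSchmidt_last, mul_zero, sub_zero]
  exact sub_eq_zero.1 (inner_self_eq_zero.1 (inner_eq_zero_of_mem_span_range hu horth))

theorem det_gram_eq_det_gram_castSucc_mul (b : Fin (n + 1) → E) :
    (gram 𝕜 b).det = (gram 𝕜 (b ∘ Fin.castSucc)).det *
      ⟪gramSchmidt 𝕜 b (Fin.last n), gramSchmidt 𝕜 b (Fin.last n)⟫ := by
  have h : ⟪gramSchmidt 𝕜 b (Fin.last n) - b (Fin.last n), gramSchmidt 𝕜 b (Fin.last n)⟫ = 0 :=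
    inner_eq_zero_of_mem_span_range (gramSchmidt_last_sub_mem_span b)
      (inner_castSucc_gramSchmidt_last b)
  rw [inner_sub_left, sub_eq_zero] at h
  rw [← inner_last_cofactorVector, cofactorVector_eq_smul_gramSchmidt_last, inner_smul_right, h]

theorem gramSchmidt_comp_castSucc (b : Fin (n + 1) → E) (i : Fin n) :
    gramSchmidt 𝕜 (b ∘ Fin.castSucc) i = gramSchmidt 𝕜 b i.castSucc := by
  induction i using WellFoundedLT.induction with
  | _ i ih =>
    rw [gramSchmidt_def, gramSchmidt_def, ← Fin.map_castSuccEmb_Iio, sum_map]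
    refine congrArg _ (sum_congr rfl fun j hj => ?_)
    rw [ih j (mem_Iio.1 hj)]
    rfl

theorem det_gram_eq_prod_inner_gramSchmidt : ∀ {n : ℕ} (b : Fin n → E),
    (gram 𝕜 b).det = ∏ i, ⟪gramSchmidt 𝕜 b i, gramSchmidt 𝕜 b i⟫
  | 0, b => by simp
  | n + 1, b => by
    rw [det_gram_eq_det_gram_castSucc_mul, det_gram_eq_prod_inner_gramSchmidt,
      Fin.prod_univ_castSucc]
    simp only [gramSchmidt_comp_castSucc]

theorem prod_smul_gramSchmidt_last_eq_cofactorVector (b : Fin (n + 1) → E) :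
    (∏ i : Fin n, ⟪gramSchmidt 𝕜 b i.castSucc, gramSchmidt 𝕜 b i.castSucc⟫) •
      gramSchmidt 𝕜 b (Fin.last n) = cofactorVector 𝕜 b := by
  simp only [cofactorVector_eq_smul_gramSchmidt_last, det_gram_eq_prod_inner_gramSchmidt,
    gramSchmidt_comp_castSucc]

theorem eq_gramSchmidt_of_forall_eq_sub_sum {ι : Type*} [LinearOrder ι] [LocallyFiniteOrderBot ι]
    [WellFoundedLT ι] {f y : ι → E}
    (h : ∀ j, y j = f j - ∑ i ∈ Iio j, (⟪y i, f j⟫ / ⟪y i, y i⟫) • y i) (j : ι) :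
    y j = gramSchmidt 𝕜 f j := by
  -- where `y i = 0`, both the quotient and the projection onto `𝕜 ∙ y i` vanish
  induction j using WellFoundedLT.induction with
  | _ j ih =>
    rw [h, gramSchmidt_def]
    refine congrArg _ (sum_congr rfl fun i hi => ?_)
    rw [ih i (mem_Iio.1 hi), Submodule.starProjection_singleton, inner_self_eq_norm_sq_to_K,
      RCLike.ofReal_pow]

end

section

variable {𝕜 : Type*} [RCLike 𝕜]

theorem conjTranspose_of_mul_of_eq_inner {m l ι : Type*} [Fintype ι] (u : m → ι → 𝕜)
    (v : l → ι → 𝕜) :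
    (of fun p j => u j p)ᴴ * of (fun p j => v j p) =
      of fun i j => inner 𝕜 (WithLp.toLp 2 (u i)) (WithLp.toLp 2 (v j)) := by
  ext i j
  simp [Matrix.mul_apply, EuclideanSpace.inner_eq_star_dotProduct, dotProduct, mul_comm]

theorem conjTranspose_mul_eq_submatrix_gram_columns {P M n : ℕ} (hM : n + 1 ≤ M)
    (A : Matrix (Fin P) (Fin M) 𝕜) (i : Fin (n + 1)) :
    (of fun (p : Fin P) (j : Fin n) => A p ⟨j, by omega⟩)ᴴ *
        (of fun (p : Fin P) (j : Fin n) =>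
          A p ⟨if (j : ℕ) < (i : ℕ) then (j : ℕ) else (j : ℕ) + 1,
            by have := j.isLt; have := i.isLt; split <;> omega⟩) =
      (gram 𝕜 fun j => WithLp.toLp 2 fun p => A p (Fin.castLE hM j)).submatrix
        Fin.castSucc i.succAbove := by
  rw [conjTranspose_of_mul_of_eq_inner]
  ext r j
  simp only [of_apply, submatrix_apply, gram_apply]
  congr 4
  ext p
  congr 1
  ext
  simp [Fin.val_succAbove_eq_ite]

theorem toLp_eq_gramSchmidt_of_forall_eq_sub_sum {P M k : ℕ} (hkM : k ≤ M)
    (a y : Fin M → Fin P → 𝕜)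
    (h : ∀ j : Fin M, (j : ℕ) < k → y j = a j -
      ∑ i ∈ univ.filter (fun i : Fin M => i < j),
        ((star (y i) ⬝ᵥ a j) / (star (y i) ⬝ᵥ y i)) • y i) (j : Fin k) :
    WithLp.toLp 2 (y (Fin.castLE hkM j)) =
      gramSchmidt 𝕜 (fun i => WithLp.toLp 2 (a (Fin.castLE hkM i))) j := by
  refine eq_gramSchmidt_of_forall_eq_sub_sum (y := fun j => WithLp.toLp 2 (y (Fin.castLE hkM j)))
    (fun j => ?_) j
  rw [h _ (by simp), filter_gt_eq_Iio, ← Fin.map_castLEEmb_Iio, sum_map]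
  simp only [Fin.castLEEmb_apply, WithLp.toLp_sub, WithLp.toLp_sum, WithLp.toLp_smul,
    EuclideanSpace.inner_toLp_toLp, dotProduct_comm]

end

-- Columns are 0-indexed: the paper's `aᵢ` is column `i - 1`, whence the exponent `k + i + 1`.
/-- The `k`-th scaled Gram–Schmidt vector `q̃_k(s) = Δ_{k-1}(s) y_k(s)` equals the
alternating cofactor combination
`∑_{i=1}^k (-1)^{k+i} det(A_{1..k-1}ᴴ(s) A_{1..k∖i}(s)) a_i(s)`
(everything stated in 1-based numbering of the paper; internally the `i`-th column
is the column of index `i-1`). -/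
theorem scaled_gram_schmidt_cofactor_formula {P M : ℕ}
    (A : ℂ → Matrix (Fin P) (Fin M) ℂ)
    (k : ℕ) (hk2 : 2 ≤ k) (hkM : k ≤ M)
    (y : ℂ → Fin M → (Fin P → ℂ))
    (s : ℂ)
    -- Gram–Schmidt recursion for the first `k` columns of `A(s)`
    (hGS : ∀ j : Fin M, (j : ℕ) < k → y s j = (fun p => A s p j) -
      ∑ i ∈ Finset.univ.filter (fun i : Fin M => i < j),
        ((star (y s i) ⬝ᵥ (fun p => A s p j)) / (star (y s i) ⬝ᵥ y s i)) • y s i) :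
    (∏ i ∈ Finset.univ.filter (fun i : Fin M => (i : ℕ) < k - 1),
        (star (y s i) ⬝ᵥ y s i)) • y s ⟨k - 1, by omega⟩ =
    ∑ i : Fin k,
      ((-1 : ℂ) ^ (k + (i : ℕ) + 1) *
        ((Matrix.of fun (p : Fin P) (j : Fin (k - 1)) =>
            A s p ⟨j, by have := j.isLt; omega⟩)ᴴ *
          Matrix.of fun (p : Fin P) (j : Fin (k - 1)) =>
            A s p ⟨if (j : ℕ) < (i : ℕ) then (j : ℕ) else (j : ℕ) + 1,
              by have := j.isLt; have := i.isLt; split <;> omega⟩).det) •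
        (fun p : Fin P => A s p (Fin.castLE hkM i)) := by
  obtain ⟨n, rfl⟩ : ∃ n, k = n + 1 := ⟨k - 1, by omega⟩
  set b : Fin (n + 1) → EuclideanSpace ℂ (Fin P) :=
    fun j => WithLp.toLp 2 fun p => A s p (Fin.castLE hkM j)
  have hy : ∀ j, y s (Fin.castLE hkM j) = WithLp.ofLp (gramSchmidt ℂ b j) := fun j =>
    congrArg WithLp.ofLp (toLp_eq_gramSchmidt_of_forall_eq_sub_sum hkM _ (y s) hGS j)
  have hsign : ∀ i : Fin (n + 1), (-1 : ℂ) ^ (n + 1 + (i : ℕ) + 1) = (-1) ^ (n + (i : ℕ)) := by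
    intro i
    rw [show n + 1 + (i : ℕ) + 1 = n + i + 2 by omega, pow_add, neg_one_sq, mul_one]
  rw [prod_filter_val_lt_eq_prod_castLE (by omega)]
  calc _ = WithLp.ofLp ((∏ i : Fin n, inner ℂ (gramSchmidt ℂ b i.castSucc)
          (gramSchmidt ℂ b i.castSucc)) • gramSchmidt ℂ b (Fin.last n)) := by
        rw [WithLp.ofLp_smul, ← hy (Fin.last n)]
        congr 1
        refine prod_congr rfl fun i _ => ?_
        rw [show Fin.castLE _ i = Fin.castLE hkM i.castSucc from rfl, hy,
          EuclideanSpace.inner_eq_star_dotProduct, dotProduct_comm]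
    _ = WithLp.ofLp (cofactorVector ℂ b) := by rw [prod_smul_gramSchmidt_last_eq_cofactorVector]
    _ = _ := by
        simp only [cofactorVector, WithLp.ofLp_sum, WithLp.ofLp_smul, hsign]
        exact sum_congr rfl fun i _ => by
          rw [← conjTranspose_mul_eq_submatrix_gram_columns hkM (A s) i]; rfl
end

section
/- Let V₁ = V₂ = W, let b₀,...,b_{B−1} be distinct unit-circle points, t₀,...,t_{T−1} unit-circle points, B the B×(2W+1) base point matrix with entries b_p^{W−q}, and T the T×(2W+1) target point matrix with entries t_p^{W−q}. Then the interpolation matrix T B† (where B† is the Moore–Penrose pseudoinverse) is real-valued, i.e., all its entries have zero imaginary part. -/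
/-!
On the unit circle `conj z = z⁻¹`, so entrywise conjugation of `B` or `T` reverses the order of
their columns. Conjugation and reindexing both preserve the Penrose conditions, so by uniqueness
of the pseudoinverse `conj B†` is `B†` with its rows reversed; in `conj T * conj B†` the two
reversals cancel, hence `T B†` is its own conjugate.
-/

open Matrix ComplexConjugate

namespace Matrix

variable {l m n o R S : Type*} [Fintype m] [Fintype n] [Semiring R] [StarRing R]

structure IsMoorePenroseInverse (A : Matrix m n R) (X : Matrix n m R) : Prop where
  mul_mul_left : A * X * A = A
  mul_mul_right : X * A * X = X
  isHermitian_mul_left : (A * X).IsHermitian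
  isHermitian_mul_right : (X * A).IsHermitian

lemma mul_eq_mul_of_isHermitian {A : Matrix m n R} {X Y : Matrix n m R}
    (hX : A * X * A = A) (hXh : (A * X).IsHermitian)
    (hY : A * Y * A = A) (hYh : (A * Y).IsHermitian) : A * X = A * Y :=
  calc A * X = (A * X)ᴴ := hXh.symm
    _ = (A * Y * (A * X))ᴴ := by rw [← Matrix.mul_assoc, hY]
    _ = A * X * (A * Y) := by rw [conjTranspose_mul, hXh.eq, hYh.eq]
    _ = A * Y := by rw [← Matrix.mul_assoc, hX]

namespace IsMoorePenroseInverse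

variable {A : Matrix m n R} {X : Matrix n m R}

lemma conjTranspose (h : IsMoorePenroseInverse A X) : IsMoorePenroseInverse Aᴴ Xᴴ where
  mul_mul_left := by
    simpa only [conjTranspose_mul, Matrix.mul_assoc] using congr_arg (·ᴴ) h.mul_mul_left
  mul_mul_right := by
    simpa only [conjTranspose_mul, Matrix.mul_assoc] using congr_arg (·ᴴ) h.mul_mul_right
  isHermitian_mul_left := by rw [← conjTranspose_mul]; exact h.isHermitian_mul_right.conjTranspose
  isHermitian_mul_right := by rw [← conjTranspose_mul]; exact h.isHermitian_mul_left.conjTranspose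

lemma unique {Y : Matrix n m R} (hX : IsMoorePenroseInverse A X) (hY : IsMoorePenroseInverse A Y) :
    X = Y := by
  have hAX : A * X = A * Y := mul_eq_mul_of_isHermitian hX.mul_mul_left hX.isHermitian_mul_left
    hY.mul_mul_left hY.isHermitian_mul_left
  have hXA : X * A = Y * A := by
    have := mul_eq_mul_of_isHermitian hX.conjTranspose.mul_mul_left
      hX.conjTranspose.isHermitian_mul_left hY.conjTranspose.mul_mul_left
      hY.conjTranspose.isHermitian_mul_left
    rwa [← conjTranspose_mul, ← conjTranspose_mul, conjTranspose_inj] at this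
  calc X = X * A * X := hX.mul_mul_right.symm
    _ = Y * A * Y := by rw [Matrix.mul_assoc, hAX, ← Matrix.mul_assoc, hXA]
    _ = Y := hY.mul_mul_right

lemma map [Semiring S] [StarRing S] (h : IsMoorePenroseInverse A X) (f : R →+* S)
    (hf : Function.Semiconj f star star) : IsMoorePenroseInverse (A.map f) (X.map f) where
  mul_mul_left := by rw [← Matrix.map_mul, ← Matrix.map_mul, h.mul_mul_left]
  mul_mul_right := by rw [← Matrix.map_mul, ← Matrix.map_mul, h.mul_mul_right]
  isHermitian_mul_left := by rw [← Matrix.map_mul]; exact h.isHermitian_mul_left.map f hf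
  isHermitian_mul_right := by rw [← Matrix.map_mul]; exact h.isHermitian_mul_right.map f hf

lemma submatrix [Fintype l] [Fintype o] (h : IsMoorePenroseInverse A X) (e₁ : l ≃ m)
    (e₂ : o ≃ n) : IsMoorePenroseInverse (A.submatrix e₁ e₂) (X.submatrix e₂ e₁) where
  mul_mul_left := by rw [submatrix_mul_equiv, submatrix_mul_equiv, h.mul_mul_left]
  mul_mul_right := by rw [submatrix_mul_equiv, submatrix_mul_equiv, h.mul_mul_right]
  isHermitian_mul_left := by
    rw [submatrix_mul_equiv]; exact h.isHermitian_mul_left.submatrix e₁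
  isHermitian_mul_right := by
    rw [submatrix_mul_equiv]; exact h.isHermitian_mul_right.submatrix e₂

end IsMoorePenroseInverse

end Matrix

lemma Complex.conj_zpow_of_norm_eq_one {z : ℂ} (hz : ‖z‖ = 1) (k : ℤ) :
    conj (z ^ k) = z ^ (-k) := by
  rw [map_zpow₀, ← Complex.inv_eq_conj hz, _root_.inv_zpow']

/-- The base (or target) point matrix of the interpolation problem. -/
noncomputable def centeredPowerMatrix {ι : Type*} (W : ℕ) (z : ι → ℂ) :
    Matrix ι (Fin (2 * W + 1)) ℂ :=
  Matrix.of fun p q => z p ^ ((W : ℤ) - ((q : ℕ) : ℤ))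

lemma map_conj_centeredPowerMatrix {ι : Type*} (W : ℕ) {z : ι → ℂ} (hz : ∀ p, ‖z p‖ = 1) :
    (centeredPowerMatrix W z).map conj = (centeredPowerMatrix W z).submatrix id Fin.revPerm := by
  ext p q
  have hrev : ((Fin.rev q : ℕ) : ℤ) = 2 * W - q := by rw [Fin.val_rev]; omega
  simp only [map_apply, submatrix_apply, centeredPowerMatrix, of_apply, id, Fin.revPerm_apply,
    Complex.conj_zpow_of_norm_eq_one (hz p), hrev]
  ring_nf

theorem interpolation_matrix_real_general {B T W : ℕ}
    (b : Fin B → ℂ) (t : Fin T → ℂ)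
    (hb : ∀ p, ‖b p‖ = 1) (ht : ∀ p, ‖t p‖ = 1)
    (Bm : Matrix (Fin B) (Fin (2 * W + 1)) ℂ)
    (hBm : Bm = Matrix.of fun (p : Fin B) (q : Fin (2 * W + 1)) => b p ^ ((W : ℤ) - ((q : ℕ) : ℤ)))
    (Tm : Matrix (Fin T) (Fin (2 * W + 1)) ℂ)
    (hTm : Tm = Matrix.of fun (p : Fin T) (q : Fin (2 * W + 1)) => t p ^ ((W : ℤ) - ((q : ℕ) : ℤ)))
    (Bd : Matrix (Fin (2 * W + 1)) (Fin B) ℂ)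
    (hBd1 : Bm * Bd * Bm = Bm) (hBd2 : Bd * Bm * Bd = Bd)
    (hBd3 : (Bm * Bd)ᴴ = Bm * Bd) (hBd4 : (Bd * Bm)ᴴ = Bd * Bm) :
    ∀ (i : Fin T) (j : Fin B), ((Tm * Bd) i j).im = 0 := by
  have hB : Bm.map conj = Bm.submatrix id Fin.revPerm := by
    subst hBm; exact map_conj_centeredPowerMatrix W hb
  have hT : Tm.map conj = Tm.submatrix id Fin.revPerm := by
    subst hTm; exact map_conj_centeredPowerMatrix W ht
  have hpinv : IsMoorePenroseInverse Bm Bd := ⟨hBd1, hBd2, hBd3, hBd4⟩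
  have hBd : Bd.map conj = Bd.submatrix Fin.revPerm id := by
    refine (hpinv.map (starRingEnd ℂ) fun _ => rfl).unique ?_
    rw [hB]
    exact hpinv.submatrix (Equiv.refl _) Fin.revPerm
  have hTBd : (Tm * Bd).map conj = Tm * Bd := by
    rw [Matrix.map_mul, hT, hBd, submatrix_mul_equiv, submatrix_id_id]
  intro i j
  exact Complex.conj_eq_iff_im.mp (congr_fun₂ hTBd i j)

/-- For `V₁ = V₂ = W`, the interpolation matrix `T B†` is real-valued, where `B†`
is the Moore–Penrose pseudoinverse of the base point matrix (characterized here by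
the four Penrose conditions). -/
theorem interpolation_matrix_real {B T W : ℕ} (hBW : 2 * W + 1 ≤ B)
    (b : Fin B → ℂ) (t : Fin T → ℂ)
    (hinj : Function.Injective b)
    (hb : ∀ p, ‖b p‖ = 1) (ht : ∀ p, ‖t p‖ = 1)
    (Bm : Matrix (Fin B) (Fin (2 * W + 1)) ℂ)
    (hBm : Bm = Matrix.of fun (p : Fin B) (q : Fin (2 * W + 1)) => b p ^ ((W : ℤ) - ((q : ℕ) : ℤ)))
    (Tm : Matrix (Fin T) (Fin (2 * W + 1)) ℂ)
    (hTm : Tm = Matrix.of fun (p : Fin T) (q : Fin (2 * W + 1)) => t p ^ ((W : ℤ) - ((q : ℕ) : ℤ)))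
    (Bd : Matrix (Fin (2 * W + 1)) (Fin B) ℂ)
    (hBd1 : Bm * Bd * Bm = Bm) (hBd2 : Bd * Bm * Bd = Bd)
    (hBd3 : (Bm * Bd)ᴴ = Bm * Bd) (hBd4 : (Bd * Bm)ᴴ = Bd * Bm) :
    ∀ (i : Fin T) (j : Fin B), ((Tm * Bd) i j).im = 0 :=
  interpolation_matrix_real_general b t hb ht Bm hBm Tm hTm Bd hBd1 hBd2 hBd3 hBd4
end
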